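/- Let V be a finite type with an adjacency relation A : V → V → Prop and an arc-weight function w : V → V → ℝ, and suppose the graph is acyclic in the sense that there exists a rank function ρ : V → ℕ with ρ y < ρ x whenever A x y. Let init : V → EReal and let f : V → EReal satisfy, for every u ∈ V, f u = min (init u) (⨅ over vertices u' with A u u' of (f u' − (w u u' : EReal))), where the infimum over the empty set is ⊤ (= +∞). Then for every u ∈ V, f u = ⨅ over all paths q starting at u (with arbitrary endpoint z) of (init z − (value(q) : EReal)). -/

import Mathlib

/-!
Any `f` with `f u ≤ init u` and `f u ≤ f v - w u v` along every arc lies below the value of every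
path, by induction along the path. Conversely, the path infimum itself satisfies both inequalities
(take the trivial path, or prepend an arc), so if `f` is at least the right-hand side of the
fixed-point equation, induction on the rank shows that `f` dominates the path infimum.
-/

/-- A path from `u` to `v` in the directed graph with adjacency `A`. -/
def IsPath {V : Type*} (A : V → V → Prop) (u v : V) (p : List V) : Prop :=
  p ≠ [] ∧ p.head? = some u ∧ p.getLast? = some v ∧ List.Chain' A p

/-- The value of a path: sum of arc weights over consecutive pairs. -/
def pathValue {V : Type*} (w : V → V → ℝ) (p : List V) : ℝ :=
  ((p.zip p.tail).map fun x => w x.1 x.2).sum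

lemma EReal.sub_coe_sub_coe (a : EReal) (b c : ℝ) :
    a - (b : EReal) - (c : EReal) = a - ((b + c : ℝ) : EReal) := by
  simp only [sub_eq_add_neg, ← EReal.coe_neg, ← EReal.coe_add, add_assoc]
  rw [_root_.neg_add]

lemma EReal.le_sub_coe_iff {a b : EReal} {c : ℝ} : a ≤ b - (c : EReal) ↔ a + c ≤ b :=
  EReal.le_sub_iff_add_le (.inl (EReal.coe_ne_bot c)) (.inl (EReal.coe_ne_top c))

section Paths

variable {V : Type*} {A : V → V → Prop} {w : V → V → ℝ} {u v z a b : V} {t : List V}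

@[simp]
lemma pathValue_singleton : pathValue w [a] = 0 := by
  simp [pathValue]

lemma pathValue_cons_cons : pathValue w (a :: b :: t) = w a b + pathValue w (b :: t) := by
  simp [pathValue]

lemma isPath_iff {p : List V} :
    IsPath A u z p ↔ p ≠ [] ∧ p.head? = some u ∧ p.getLast? = some z ∧ p.IsChain A :=
  Iff.rfl

lemma isPath_singleton (u : V) : IsPath A u u [u] :=
  ⟨by simp, rfl, rfl, List.isChain_singleton u⟩

lemma isPath_singleton_iff : IsPath A u z [a] ↔ a = u ∧ z = u := by
  simp only [isPath_iff, List.head?_cons, List.getLast?_singleton, Option.some.injEq, ne_eq,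
    reduceCtorEq, not_false_eq_true, List.isChain_singleton, and_true, true_and]
  constructor <;> rintro ⟨rfl, rfl⟩ <;> exact ⟨rfl, rfl⟩

lemma isPath_cons_cons_iff :
    IsPath A u z (a :: b :: t) ↔ a = u ∧ A u b ∧ IsPath A b z (b :: t) := by
  simp only [isPath_iff, List.head?_cons, List.getLast?_cons_cons, Option.some.injEq,
    List.isChain_cons_cons, ne_eq, reduceCtorEq, not_false_eq_true, true_and]
  constructor
  · rintro ⟨rfl, hz, hab, hc⟩
    exact ⟨rfl, hab, hz, hc⟩
  · rintro ⟨rfl, hab, hz, hc⟩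
    exact ⟨rfl, hz, hab, hc⟩

lemma IsPath.cons (hab : A u v) (h : IsPath A v z (v :: t)) : IsPath A u z (u :: v :: t) :=
  isPath_cons_cons_iff.2 ⟨rfl, hab, h⟩

end Paths

section PathInf

variable {V : Type*} (A : V → V → Prop) (w : V → V → ℝ) (init : V → EReal)

noncomputable def pathInf (u : V) : EReal :=
  ⨅ z, ⨅ q : {q : List V // IsPath A u z q}, (init z - (pathValue w q : EReal))

variable {A w init}

lemma le_pathInf_iff {x : EReal} {u : V} :
    x ≤ pathInf A w init u ↔ ∀ z q, IsPath A u z q → x ≤ init z - (pathValue w q : EReal) := by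
  simp only [pathInf, le_iInf_iff, Subtype.forall]

lemma pathInf_le_of_isPath {u z : V} {q : List V} (hq : IsPath A u z q) :
    pathInf A w init u ≤ init z - (pathValue w q : EReal) :=
  le_pathInf_iff.1 le_rfl z q hq

lemma pathInf_le_init (u : V) : pathInf A w init u ≤ init u := by
  simpa using pathInf_le_of_isPath (w := w) (init := init) (isPath_singleton (A := A) u)

lemma pathInf_le_sub {u v : V} (huv : A u v) :
    pathInf A w init u ≤ pathInf A w init v - (w u v : EReal) := by
  rw [EReal.le_sub_coe_iff, le_pathInf_iff]
  rintro z (_ | ⟨b, t⟩) hq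
  · exact absurd rfl hq.1
  · obtain rfl : b = v := Option.some.inj hq.2.1
    rw [← EReal.le_sub_coe_iff, EReal.sub_coe_sub_coe, add_comm, ← pathValue_cons_cons]
    exact pathInf_le_of_isPath (hq.cons huv)

lemma le_pathInf {f : V → EReal} (hinit : ∀ u, f u ≤ init u)
    (hstep : ∀ u v, A u v → f u ≤ f v - (w u v : EReal)) (u : V) :
    f u ≤ pathInf A w init u := by
  rw [le_pathInf_iff]
  intro z q hq
  induction q generalizing u with
  | nil => exact absurd rfl hq.1
  | cons a t ih =>
    cases t with
    | nil =>
      obtain ⟨rfl, rfl⟩ := isPath_singleton_iff.1 hq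
      simpa using hinit _
    | cons b t =>
      obtain ⟨rfl, hab, hbz⟩ := isPath_cons_cons_iff.1 hq
      calc f a ≤ f b - (w a b : EReal) := hstep a b hab
        _ ≤ init z - (pathValue w (b :: t) : EReal) - (w a b : EReal) :=
          EReal.sub_le_sub (ih b hbz) le_rfl
        _ = init z - (pathValue w (a :: b :: t) : EReal) := by
          rw [EReal.sub_coe_sub_coe, add_comm, ← pathValue_cons_cons]

lemma pathInf_le_of_rank {f : V → EReal} (ρ : V → ℕ) (hρ : ∀ x y, A x y → ρ y < ρ x)
    (hf : ∀ u, min (init u) (⨅ u' : {u' // A u u'}, (f u' - (w u u' : EReal))) ≤ f u)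
    (u : V) : pathInf A w init u ≤ f u := by
  induction hn : ρ u using Nat.strong_induction_on generalizing u with
  | _ n ih =>
    refine le_trans (le_min (pathInf_le_init u) (le_iInf fun ⟨u', huu'⟩ => ?_)) (hf u)
    calc pathInf A w init u ≤ pathInf A w init u' - (w u u' : EReal) := pathInf_le_sub huu'
      _ ≤ f u' - (w u u' : EReal) :=
        EReal.sub_le_sub (ih (ρ u') (hn ▸ hρ u u' huu') u' rfl) le_rfl

end PathInf

theorem threshold_propagation_general {V : Type*} (A : V → V → Prop)
    (w : V → V → ℝ) (ρ : V → ℕ) (hρ : ∀ x y, A x y → ρ y < ρ x)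
    (init f : V → EReal)
    (hf : ∀ u, f u = min (init u) (⨅ u' : {u' // A u u'}, (f u' - (w u u' : EReal)))) :
    ∀ u, f u = ⨅ z, ⨅ q : {q : List V // IsPath A u z q},
      (init z - (pathValue w q : EReal)) := by
  have hinit : ∀ u, f u ≤ init u := fun u => (hf u).trans_le (min_le_left _ _)
  have hstep : ∀ u v, A u v → f u ≤ f v - (w u v : EReal) := fun u v huv =>
    (hf u).trans_le ((min_le_right _ _).trans (iInf_le_of_le ⟨v, huv⟩ le_rfl))
  intro u
  exact (le_pathInf hinit hstep u).antisymm (pathInf_le_of_rank ρ hρ (fun u => (hf u).ge) u)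

/-- Correctness of the bottom-up threshold propagation (Algorithm 4): on a
finite acyclic graph, if `f` satisfies the local fixed-point equation
`f u = min (init u) (⨅_{A u u'} (f u' − w u u'))` (with `⨅ ∅ = ⊤` in `EReal`),
then `f u` is the infimum, over all paths `q` starting at `u` with arbitrary
endpoint `z`, of `init z − value(q)`. -/
theorem threshold_propagation {V : Type*} [Fintype V] (A : V → V → Prop)
    (w : V → V → ℝ) (ρ : V → ℕ) (hρ : ∀ x y, A x y → ρ y < ρ x)
    (init f : V → EReal)
    (hf : ∀ u, f u = min (init u) (⨅ u' : {u' // A u u'}, (f u' - (w u u' : EReal)))) :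
    ∀ u, f u = ⨅ z, ⨅ q : {q : List V // IsPath A u z q},
      (init z - (pathValue w q : EReal)) :=
  threshold_propagation_general A w ρ hρ init f hf
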